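/- arXiv:2112.09553 — 15 statements merged into one kernel-verified Lean document; each statement's English description precedes it below -/
import Mathlib

section
/- Let A, B, C be any real numbers with A² + B² = C². Then the triple (2A²C², B²(A²+C²), A⁴+C⁴) satisfies a² + b² = c², i.e. (2A²C²)² + (B²(A²+C²))² = (A⁴+C⁴)². -/
theorem stmt1 (A B C : ℝ) (h : A^2 + B^2 = C^2) :
    (2*A^2*C^2)^2 + (B^2*(A^2 + C^2))^2 = (A^4 + C^4)^2 := by
  have hB : B^2 = C^2 - A^2 := by linarith
  rw [hB]; ring
end

section
/- Let m, n be real numbers and set A = m²−n², B = 2mn, C = m²+n². Then the point (x,y) = (−B², 2ABC) lies on the elliptic curve y² = x³ − (A²+C²)² x. -/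
theorem stmt5 (m n A B C : ℝ)
    (hA : A = m^2 - n^2) (hB : B = 2*m*n) (hC : C = m^2 + n^2) :
    (2*A*B*C)^2 = (-B^2)^3 - (A^2 + C^2)^2 * (-B^2) := by
  subst hA hB hC; ring
end

section
/- Let m, n be real numbers and set A = m²−n², B = 2mn, C = m²+n². Then the point (x,y) = (−A², 2ABC) lies on the curve y² = x³ − (B²+C²)² x, and the point (C², 2ABC) lies on the curve y² = x³ − (B²−A²)² x. -/
theorem stmt6 (m n A B C : ℝ)
    (hA : A = m^2 - n^2) (hB : B = 2*m*n) (hC : C = m^2 + n^2) :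
    (2*A*B*C)^2 = (-A^2)^3 - (B^2 + C^2)^2 * (-A^2) ∧
    (2*A*B*C)^2 = (C^2)^3 - (B^2 - A^2)^2 * (C^2) := by
  subst hA hB hC; constructor <;> ring
end

section
/- Let m, n be real numbers and define x = 2(m⁸ + 6m⁴n⁴ + n⁸), y = 4nm(m⁴−n⁴), z = 2(m⁸ + 4m⁶n² − 2m⁴n⁴ + 4m²n⁶ + n⁸), t = 2(m⁸ − 4m⁶n² − 2m⁴n⁴ − 4m²n⁶ + n⁸), and N = 2(m⁴+n⁴). Then x² + N·y² = z² and x² − N·y² = t². -/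
theorem stmt7 (m n x y z t N : ℝ)
    (hx : x = 2*(m^8 + 6*m^4*n^4 + n^8))
    (hy : y = 4*n*m*(m^4 - n^4))
    (hz : z = 2*(m^8 + 4*m^6*n^2 - 2*m^4*n^4 + 4*m^2*n^6 + n^8))
    (ht : t = 2*(m^8 - 4*m^6*n^2 - 2*m^4*n^4 - 4*m^2*n^6 + n^8))
    (hN : N = 2*(m^4 + n^4)) :
    x^2 + N*y^2 = z^2 ∧ x^2 - N*y^2 = t^2 := by subst hx hy hz ht hN; constructor <;> ring
end

section
/- Let m, n be real numbers and define x = m⁸ + 4m⁶n² + 22m⁴n⁴ + 4m²n⁶ + n⁸, y = 4nm(m⁴−n⁴), z = m⁸ + 12m⁶n² + 6m⁴n⁴ + 12m²n⁶ + n⁸, t = m⁸ − 4m⁶n² − 26m⁴n⁴ − 4m²n⁶ + n⁸, and N = m⁴ + 6m²n² + n⁴. Then x² + N·y² = z² and x² − N·y² = t². -/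
theorem stmt8 (m n x y z t N : ℝ)
    (hx : x = m^8 + 4*m^6*n^2 + 22*m^4*n^4 + 4*m^2*n^6 + n^8)
    (hy : y = 4*n*m*(m^4 - n^4))
    (hz : z = m^8 + 12*m^6*n^2 + 6*m^4*n^4 + 12*m^2*n^6 + n^8)
    (ht : t = m^8 - 4*m^6*n^2 - 26*m^4*n^4 - 4*m^2*n^6 + n^8)
    (hN : N = m^4 + 6*m^2*n^2 + n^4) :
    x^2 + N*y^2 = z^2 ∧ x^2 - N*y^2 = t^2 := by
  subst hx hy hz ht hN; constructor <;> ring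
end

section
/- Let m, n be real numbers and define x = m⁸ − 4m⁶n² + 22m⁴n⁴ − 4m²n⁶ + n⁸, y = 4nm(m⁴−n⁴), z = m⁸ − 12m⁶n² + 6m⁴n⁴ − 12m²n⁶ + n⁸, t = m⁸ + 4m⁶n² − 26m⁴n⁴ + 4m²n⁶ + n⁸, and N = −m⁴ + 6m²n² − n⁴. Then x² + N·y² = z² and x² − N·y² = t². -/
theorem stmt9 (m n x y z t N : ℝ)
    (hx : x = m^8 - 4*m^6*n^2 + 22*m^4*n^4 - 4*m^2*n^6 + n^8)
    (hy : y = 4*n*m*(m^4 - n^4))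
    (hz : z = m^8 - 12*m^6*n^2 + 6*m^4*n^4 - 12*m^2*n^6 + n^8)
    (ht : t = m^8 + 4*m^6*n^2 - 26*m^4*n^4 + 4*m^2*n^6 + n^8)
    (hN : N = -m^4 + 6*m^2*n^2 - n^4) :
    x^2 + N*y^2 = z^2 ∧ x^2 - N*y^2 = t^2 := by
  subst hx hy hz ht hN; constructor <;> ring
end

section
/- Let A, B, C be nonzero real numbers with A² + B² = C². Then (2AC/B)² + (2BC/A)² + (2BA/C)² = 4(C⁴ − (AB)²)²/(ABC)². -/
theorem stmt11 (A B C : ℝ) (hA : A ≠ 0) (hB : B ≠ 0) (hC : C ≠ 0)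
    (h : A^2 + B^2 = C^2) :
    (2*A*C/B)^2 + (2*B*C/A)^2 + (2*B*A/C)^2 = 4*(C^4 - (A*B)^2)^2/(A*B*C)^2 := by
  field_simp
  linear_combination (4*A^2*B^2*C^6*(A^2+B^2+C^2) + 4*C^4*(1 - C^2*A^2*B^2)*(A^2+B^2+C^2)) * h
end

section
/- For any real t with t⁸ + 14t⁴ + 1 ≠ 0, the point (x,y,z) with x = (t⁴−1)²/(t⁸+14t⁴+1), y = 4t²(t²+1)²/(t⁸+14t⁴+1), z = 4t²(t²−1)²/(t⁸+14t⁴+1) satisfies both x + y − z = 1 and x² + y² + z² = 1. -/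
theorem stmt12 (t : ℝ) (h : t^8 + 14*t^4 + 1 ≠ 0)
    (x y z : ℝ)
    (hx : x = (t^4 - 1)^2 / (t^8 + 14*t^4 + 1))
    (hy : y = 4*t^2*(t^2 + 1)^2 / (t^8 + 14*t^4 + 1))
    (hz : z = 4*t^2*(t^2 - 1)^2 / (t^8 + 14*t^4 + 1)) :
    x + y - z = 1 ∧ x^2 + y^2 + z^2 = 1 := by
  subst hx hy hz
  constructor <;> field_simp <;> ring
end

section
/- For any real t with t⁸ + 14t⁴ + 1 ≠ 0, the point (x,y,z) with x = 4t²(t⁴+1)/(t⁸+14t⁴+1), y = (t²−1)²(t⁴+6t²+1)/(2(t⁸+14t⁴+1)), z = −(t²+1)²(t⁴−6t²+1)/(2(t⁸+14t⁴+1)) satisfies both x − y − z = 0 and x² + y² + z² = 1/2. -/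
theorem stmt13 (t : ℝ) (h : t^8 + 14*t^4 + 1 ≠ 0)
    (x y z : ℝ)
    (hx : x = 4*t^2*(t^4 + 1) / (t^8 + 14*t^4 + 1))
    (hy : y = (t^2 - 1)^2*(t^4 + 6*t^2 + 1) / (2*(t^8 + 14*t^4 + 1)))
    (hz : z = -((t^2 + 1)^2*(t^4 - 6*t^2 + 1)) / (2*(t^8 + 14*t^4 + 1))) :
    x - y - z = 0 ∧ x^2 + y^2 + z^2 = 1/2 := by
  subst hx hy hz
  constructor <;> field_simp <;> ring
end

section
/- For any real t with t⁸ + 14t⁴ + 1 ≠ 0, the point (x,y,z) with x = (t⁸+6t⁴+1)/(t⁸+14t⁴+1), y = (t⁸+4t⁶+22t⁴+4t²+1)/(2(t⁸+14t⁴+1)), z = (t⁸−4t⁶+22t⁴−4t²+1)/(2(t⁸+14t⁴+1)) satisfies both x + y + z = 2 and x² + y² + z² = 3/2. -/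
theorem stmt14 (t : ℝ) (h : t^8 + 14*t^4 + 1 ≠ 0)
    (x y z : ℝ)
    (hx : x = (t^8 + 6*t^4 + 1) / (t^8 + 14*t^4 + 1))
    (hy : y = (t^8 + 4*t^6 + 22*t^4 + 4*t^2 + 1) / (2*(t^8 + 14*t^4 + 1)))
    (hz : z = (t^8 - 4*t^6 + 22*t^4 - 4*t^2 + 1) / (2*(t^8 + 14*t^4 + 1))) :
    x + y + z = 2 ∧ x^2 + y^2 + z^2 = 3/2 := by
  subst hx hy hz
  constructor <;> field_simp <;> ring
end

section
/- With the Trinity points (x₁,y₁,z₁), (x₂,y₂,z₂), (x₃,y₃,z₃) defined as in equations S₁, S₂, S₃ parameterized by real t (with t⁸+14t⁴+1 ≠ 0), one has the componentwise Pythagorean relations x₁² + x₂² = x₃², y₁² + y₂² = y₃², and z₁² + z₂² = z₃². -/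
theorem stmt15 (t : ℝ) (h : t^8 + 14*t^4 + 1 ≠ 0)
    (x1 y1 z1 x2 y2 z2 x3 y3 z3 : ℝ)
    (hx1 : x1 = (t^4 - 1)^2 / (t^8 + 14*t^4 + 1))
    (hy1 : y1 = 4*t^2*(t^2 + 1)^2 / (t^8 + 14*t^4 + 1))
    (hz1 : z1 = 4*t^2*(t^2 - 1)^2 / (t^8 + 14*t^4 + 1))
    (hx2 : x2 = 4*t^2*(t^4 + 1) / (t^8 + 14*t^4 + 1))
    (hy2 : y2 = (t^2 - 1)^2*(t^4 + 6*t^2 + 1) / (2*(t^8 + 14*t^4 + 1)))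
    (hz2 : z2 = -((t^2 + 1)^2*(t^4 - 6*t^2 + 1)) / (2*(t^8 + 14*t^4 + 1)))
    (hx3 : x3 = (t^8 + 6*t^4 + 1) / (t^8 + 14*t^4 + 1))
    (hy3 : y3 = (t^8 + 4*t^6 + 22*t^4 + 4*t^2 + 1) / (2*(t^8 + 14*t^4 + 1)))
    (hz3 : z3 = (t^8 - 4*t^6 + 22*t^4 - 4*t^2 + 1) / (2*(t^8 + 14*t^4 + 1))) :
    x1^2 + x2^2 = x3^2 ∧ y1^2 + y2^2 = y3^2 ∧ z1^2 + z2^2 = z3^2 := by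
  subst hx1 hy1 hz1 hx2 hy2 hz2 hx3 hy3 hz3
  refine ⟨?_, ?_, ?_⟩ <;> · field_simp; ring
end

section
/- Define vectors a = (x₁,y₁,z₁), b = (x₂,−y₂,z₂), c = (x₃,y₃,−z₃) from the Trinity system parameterized by real t with t⁸+14t⁴+1 ≠ 0. Then a·b = 0, b·c = 0, a·c = 1, and the scalar triple product a·(b×c) = 1/2. -/
theorem stmt16 (t : ℝ) (h : t^8 + 14*t^4 + 1 ≠ 0)
    (a1 a2 a3 b1 b2 b3 c1 c2 c3 : ℝ)
    (ha1 : a1 = (t^4 - 1)^2 / (t^8 + 14*t^4 + 1))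
    (ha2 : a2 = 4*t^2*(t^2 + 1)^2 / (t^8 + 14*t^4 + 1))
    (ha3 : a3 = 4*t^2*(t^2 - 1)^2 / (t^8 + 14*t^4 + 1))
    (hb1 : b1 = 4*t^2*(t^4 + 1) / (t^8 + 14*t^4 + 1))
    (hb2 : b2 = -((t^2 - 1)^2*(t^4 + 6*t^2 + 1)) / (2*(t^8 + 14*t^4 + 1)))
    (hb3 : b3 = -((t^2 + 1)^2*(t^4 - 6*t^2 + 1)) / (2*(t^8 + 14*t^4 + 1)))
    (hc1 : c1 = (t^8 + 6*t^4 + 1) / (t^8 + 14*t^4 + 1))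
    (hc2 : c2 = (t^8 + 4*t^6 + 22*t^4 + 4*t^2 + 1) / (2*(t^8 + 14*t^4 + 1)))
    (hc3 : c3 = -((t^8 - 4*t^6 + 22*t^4 - 4*t^2 + 1) / (2*(t^8 + 14*t^4 + 1)))) :
    a1*b1 + a2*b2 + a3*b3 = 0 ∧
    b1*c1 + b2*c2 + b3*c3 = 0 ∧
    a1*c1 + a2*c2 + a3*c3 = 1 ∧
    a1*(b2*c3 - b3*c2) + a2*(b3*c1 - b1*c3) + a3*(b1*c2 - b2*c1) = 1/2 := by
  subst ha1 ha2 ha3 hb1 hb2 hb3 hc1 hc2 hc3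
  refine ⟨?_, ?_, ?_, ?_⟩ <;> field_simp <;> ring
end

section
/- For every rational t with 2−4t ≠ 0 and 16t⁴−32t³+24t²−8t−3 ≠ 0, setting a = (−16t⁴+32t³−24t²+8t+3)/(2−4t) and b = 4(32t⁵−80t⁴+80t³−40t²+18t−5)/(16t⁴−32t³+24t²−8t−3), one has a·b/2 = (4t²+1)(4t²−8t+5), and a² + b² is the square of a rational number. Hence (4t²+1)(4t²−8t+5) is a congruent number (the area of a rational right triangle) for all such rational t. -/
theorem stmt17 (t : ℚ) (h1 : 2 - 4*t ≠ 0) (h2 : 16*t^4 - 32*t^3 + 24*t^2 - 8*t - 3 ≠ 0)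
    (a b : ℚ)
    (ha : a = (-16*t^4 + 32*t^3 - 24*t^2 + 8*t + 3)/(2 - 4*t))
    (hb : b = 4*(32*t^5 - 80*t^4 + 80*t^3 - 40*t^2 + 18*t - 5)/(16*t^4 - 32*t^3 + 24*t^2 - 8*t - 3)) :
    a*b/2 = (4*t^2 + 1)*(4*t^2 - 8*t + 5) ∧ ∃ c : ℚ, a^2 + b^2 = c^2 := by
  subst ha hb
  constructor
  · rw [div_mul_div_comm, div_div, div_eq_iff (mul_ne_zero (mul_ne_zero h1 h2) two_ne_zero)]
    ring
  · refine ⟨(256*t^8 - 1024*t^7 + 1792*t^6 - 1792*t^5 + 1504*t^4 - 1216*t^3 + 688*t^2 - 208*t + 41)/((2 - 4*t)*(16*t^4 - 32*t^3 + 24*t^2 - 8*t - 3)), ?_⟩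
    rw [div_pow, div_pow, div_pow, div_add_div _ _ (pow_ne_zero 2 h1) (pow_ne_zero 2 h2), div_eq_div_iff (mul_ne_zero (pow_ne_zero 2 h1) (pow_ne_zero 2 h2)) (pow_ne_zero 2 (mul_ne_zero h1 h2))]
    ring
end

section
/- For every integer n ≥ 1, the Lucas and Fibonacci numbers satisfy (5F_{2n}²)² + (4L_{2n})² = (L_{2n}²+4)², and the area of the right triangle with legs 5F_{2n} and 4L_{2n}/F_{2n} equals 10L_{2n}; consequently 10L_{2n} is a congruent number. -/
def lucas : ℕ → ℕ
  | 0 => 2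
  | 1 => 1
  | n + 2 => lucas n + lucas (n + 1)

lemma lucas_eq (n : ℕ) : (lucas n : ℤ) = 2 * Nat.fib (n + 1) - Nat.fib n := by
  induction n using Nat.twoStepInduction with
  | zero => simp [lucas]
  | one => simp [lucas]
  | more n ih1 ih2 =>
    have h1 : Nat.fib (n+3) = Nat.fib (n+1) + Nat.fib (n+2) := Nat.fib_add_two
    have h2 : Nat.fib (n+2) = Nat.fib n + Nat.fib (n+1) := Nat.fib_add_two
    show ((lucas n + lucas (n + 1) : ℕ) : ℤ) = 2 * Nat.fib (n+3) - Nat.fib (n+2)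
    push_cast [h1, h2]
    linarith [ih1, ih2]

lemma fib_id (n : ℕ) :
    ((Nat.fib (n + 1) : ℤ))^2 - Nat.fib (n + 1) * Nat.fib n - (Nat.fib n : ℤ)^2
      = (-1) ^ n := by
  induction n with
  | zero => simp
  | succ n ih =>
    rw [Nat.fib_add_two]
    push_cast
    push_cast at ih
    rw [show ((-1:ℤ))^(n+1) = -((-1:ℤ))^n from by ring, ← ih]
    ring

lemma lucas_sq (n : ℕ) :
    ((lucas n : ℤ))^2 = 5 * (Nat.fib n : ℤ)^2 + 4 * (-1) ^ n := by
  rw [lucas_eq]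
  have := fib_id n
  nlinarith [this]

theorem stmt18 (n : ℕ) (hn : 1 ≤ n) :
    ((5 : ℚ) * (Nat.fib (2*n))^2)^2 + (4 * lucas (2*n))^2 = ((lucas (2*n))^2 + 4)^2 ∧
    (5 * (Nat.fib (2*n) : ℚ)) * (4 * lucas (2*n) / (Nat.fib (2*n) : ℚ)) / 2
      = 10 * lucas (2*n) ∧
    ∃ a b c : ℚ, a^2 + b^2 = c^2 ∧ a*b/2 = 10 * lucas (2*n) := by
  have hL : ((lucas (2*n) : ℤ))^2 = 5 * (Nat.fib (2*n) : ℤ)^2 + 4 := by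
    rw [lucas_sq, pow_mul]; norm_num
  have hLQ : ((lucas (2*n) : ℚ))^2 = 5 * (Nat.fib (2*n) : ℚ)^2 + 4 := by
    exact_mod_cast congrArg (fun x : ℤ => (x : ℚ)) hL
  have hF : (Nat.fib (2*n) : ℚ) ≠ 0 := by
    have : 0 < Nat.fib (2*n) := Nat.fib_pos.mpr (by omega)
    exact_mod_cast this.ne'
  refine ⟨by nlinarith [hLQ], by field_simp; ring, ?_⟩
  refine ⟨5 * Nat.fib (2*n), 4 * lucas (2*n) / Nat.fib (2*n),
    ((lucas (2*n))^2 + 4) / Nat.fib (2*n), ?_, ?_⟩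
  · field_simp
    nlinarith [hLQ]
  · field_simp
    ring
end

section
/- For integers m ≥ 1 and n ≥ 2, with T_m the Chebyshev polynomial of the first kind and U_{m−1} of the second kind, the identity T_m(n)² = (n²−1)U_{m−1}(n)² + 1 implies ((n²−1)U_{m−1}(n))² + (2T_m(n)/U_{m−1}(n))² = ((T_m(n)²+1)/U_{m−1}(n))², so that (n²−1)T_m(n), the area of this rational right triangle, is a congruent number. Moreover the point (1−n², (n²−1)²U_{m−1}(n)) lies on the elliptic curve y² = x³ − ((n²−1)T_m(n))² x. -/
open Polynomial Chebyshev in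
/-- Pell identity for Chebyshev polynomials. -/
lemma cheb_pell (k : ℤ) :
    (Polynomial.Chebyshev.T ℚ k)^2 - (X^2 - 1) * (Polynomial.Chebyshev.U ℚ (k-1))^2 = 1 := by
  induction k using Polynomial.Chebyshev.induct with
  | zero => simp
  | one => simp [Polynomial.Chebyshev.T_one]
  | add_two k ih1 ih2 =>
    have h1 := Polynomial.Chebyshev.T_eq_X_mul_T_sub_pol_U ℚ (k : ℤ)
    have h2 := Polynomial.Chebyshev.U_eq_X_mul_U_add_T ℚ (k : ℤ)
    have e1 : ((k : ℤ) + 1 - 1) = (k : ℤ) := by ring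
    have e2 : ((k : ℤ) + 2 - 1) = (k : ℤ) + 1 := by ring
    rw [e1] at ih1
    rw [e2]
    linear_combination
      (Polynomial.Chebyshev.T ℚ ((k : ℤ) + 2) + X * Polynomial.Chebyshev.T ℚ ((k : ℤ) + 1)
        - (1 - X^2) * Polynomial.Chebyshev.U ℚ (k : ℤ)) * h1
      - (X^2 - 1) * (Polynomial.Chebyshev.U ℚ ((k : ℤ) + 1)
        + X * Polynomial.Chebyshev.U ℚ (k : ℤ) + Polynomial.Chebyshev.T ℚ ((k : ℤ) + 1)) * h2
      + ih1
  | neg_add_one k ih1 ih2 =>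
    -- goal at -k - 1, from ih1 at -k; use step relating pell(j) and pell(j+1) with j = -k-1
    have h1 := Polynomial.Chebyshev.T_eq_X_mul_T_sub_pol_U ℚ (-(k : ℤ) - 2)
    have h2 := Polynomial.Chebyshev.U_eq_X_mul_U_add_T ℚ (-(k : ℤ) - 2)
    have e0 : (-(k : ℤ) - 2 + 2) = -(k : ℤ) := by ring
    have e1 : (-(k : ℤ) - 2 + 1) = -(k : ℤ) - 1 := by ring
    have e2 : (-(k : ℤ) - 1 - 1) = -(k : ℤ) - 2 := by ring
    have e3 : (-(k : ℤ) - 1) = -(k : ℤ) - 1 := rfl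
    rw [e0, e1] at h1
    rw [e1] at h2
    have e4 : (-(k : ℤ) - 1) = -(k : ℤ) - 1 := rfl
    have ih1' : (Polynomial.Chebyshev.T ℚ (-(k : ℤ)))^2
        - (X^2 - 1) * (Polynomial.Chebyshev.U ℚ (-(k : ℤ) - 1))^2 = 1 := by
      have : (-(k : ℤ) - 1) = (-(k : ℤ)) - 1 := by ring
      rw [this]; exact ih1
    rw [e2]
    linear_combination
      (-(Polynomial.Chebyshev.T ℚ (-(k : ℤ)) + X * Polynomial.Chebyshev.T ℚ (-(k : ℤ) - 1)
        - (1 - X^2) * Polynomial.Chebyshev.U ℚ (-(k : ℤ) - 2))) * h1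
      + (X^2 - 1) * (Polynomial.Chebyshev.U ℚ (-(k : ℤ) - 1)
        + X * Polynomial.Chebyshev.U ℚ (-(k : ℤ) - 2)
        + Polynomial.Chebyshev.T ℚ (-(k : ℤ) - 1)) * h2
      + ih1'

open Polynomial Chebyshev in
lemma cheb_U_pos (c : ℚ) (hc : 2 ≤ c) (k : ℕ) :
    1 ≤ (Polynomial.Chebyshev.U ℚ k).eval c ∧
      (Polynomial.Chebyshev.U ℚ k).eval c ≤ (Polynomial.Chebyshev.U ℚ (k+1 : ℕ)).eval c := by
  induction k with
  | zero => simp [Polynomial.Chebyshev.U_one]; nlinarith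
  | succ k ih =>
    obtain ⟨h1, h2⟩ := ih
    have h3 := congrArg (Polynomial.eval c) (Polynomial.Chebyshev.U_add_two ℚ (k : ℤ))
    simp only [Polynomial.eval_sub, Polynomial.eval_mul, Polynomial.eval_ofNat,
      Polynomial.eval_X] at h3
    have e : (((k : ℕ) + 1 + 1 : ℕ) : ℤ) = ((k : ℤ) + 2 : ℤ) := by push_cast; ring
    have e2 : (((k : ℕ) + 1 : ℕ) : ℤ) = ((k : ℤ) + 1 : ℤ) := by push_cast; ring
    rw [e2] at h2
    have hpos1 : (1 : ℚ) ≤ (Polynomial.Chebyshev.U ℚ ((k : ℤ) + 1)).eval c := le_trans h1 h2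
    constructor
    · rw [e2]; exact hpos1
    · rw [e, e2]
      nlinarith [mul_nonneg (by linarith : (0:ℚ) ≤ 2*c - 2)
        (by linarith : (0:ℚ) ≤ (Polynomial.Chebyshev.U ℚ ((k : ℤ) + 1)).eval c)]

open Polynomial Chebyshev in
theorem stmt19 (m n : ℤ) (hm : 1 ≤ m) (hn : 2 ≤ n)
    (Tv Uv : ℚ)
    (hT : Tv = (Polynomial.Chebyshev.T ℚ m).eval (n : ℚ))
    (hU : Uv = (Polynomial.Chebyshev.U ℚ (m - 1)).eval (n : ℚ)) :
    Tv^2 = ((n : ℚ)^2 - 1) * Uv^2 + 1 ∧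
    (((n : ℚ)^2 - 1) * Uv)^2 + (2*Tv/Uv)^2 = ((Tv^2 + 1)/Uv)^2 ∧
    (((n : ℚ)^2 - 1) * Uv) * (2*Tv/Uv) / 2 = ((n : ℚ)^2 - 1) * Tv ∧
    (((n : ℚ)^2 - 1)^2 * Uv)^2 = (1 - (n : ℚ)^2)^3 - (((n : ℚ)^2 - 1) * Tv)^2 * (1 - (n : ℚ)^2) := by
  have hnq : (2 : ℚ) ≤ (n : ℚ) := by exact_mod_cast hn
  -- Pell identity evaluated at n
  have pell : Tv^2 = ((n : ℚ)^2 - 1) * Uv^2 + 1 := by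
    have h := congrArg (Polynomial.eval (n : ℚ)) (cheb_pell m)
    simp only [Polynomial.eval_sub, Polynomial.eval_mul, Polynomial.eval_pow,
      Polynomial.eval_X, Polynomial.eval_one] at h
    rw [hT, hU]
    linarith
  -- Uv ≠ 0
  have hUpos : 1 ≤ Uv := by
    have hk : m - 1 = ((m - 1).toNat : ℤ) := by omega
    rw [hU, hk]
    exact (cheb_U_pos (n : ℚ) hnq (m-1).toNat).1
  have hU0 : Uv ≠ 0 := by linarith
  refine ⟨pell, ?_, ?_, ?_⟩
  · field_simp
    nlinarith [pell]
  · field_simp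
  · linear_combination (-(((n : ℚ)^2 - 1)^3)) * pell
end
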